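/- arXiv:1807.07022 — 3 statements merged into one kernel-verified Lean document; each statement's English description precedes it below -/
import Mathlib

section
/- Soundness of the Emp rule: for every n ∈ ℕ and every function dictionary Δ, if the set EV(Γ, {φ; emp}, {ψ; emp}) of existentials of the goal is empty and the pure implication φ ⇒ ψ is valid, then the specification Σ; Γ; {φ; emp} skip {ψ; emp} is n-valid w.r.t. Δ. -/
set_option maxHeartbeats 1000000

namespace SSL

/-! ## Basic syntax: variables, values, locations -/

abbrev Var := String
abbrev Val := Int
abbrev Loc := ℕ

/-- Expressions of the programming language (also used as pure formulae). -/
inductive Expr : Type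
  | lit : Val → Expr
  | var : Var → Expr
  | add : Expr → Expr → Expr
  | eq : Expr → Expr → Expr
  | and : Expr → Expr → Expr
  | not : Expr → Expr
  deriving DecidableEq

/-- Stores: finite maps from program variables to values. -/
abbrev Store := Finmap (fun _ : Var => Val)
/-- Heaps: finite partial maps from locations to values. -/
abbrev Heap := Finmap (fun _ : Loc => Val)

/-- Valuation of an expression under a store. -/
def Expr.eval : Expr → Store → Option Val
  | .lit v, _ => some v
  | .var x, s => s.lookup x
  | .add e₁ e₂, s => do pure ((← e₁.eval s) + (← e₂.eval s))
  | .eq e₁ e₂, s => do pure (if (← e₁.eval s) = (← e₂.eval s) then (1 : Val) else 0)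
  | .and e₁ e₂, s => do
      pure (if ((← e₁.eval s) = (1 : Val) ∧ (← e₂.eval s) = (1 : Val)) then (1 : Val) else 0)
  | .not e, s => do pure (if (← e.eval s) = (1 : Val) then (0 : Val) else 1)

/-- A (boolean) expression is true under a store. -/
def Expr.holds (e : Expr) (s : Store) : Prop := e.eval s = some 1

/-- Validity of the pure implication φ ⇒ ψ. -/
def PImplies (φ ψ : Expr) : Prop := ∀ s : Store, φ.holds s → ψ.holds s

def Expr.vars : Expr → Finset Var
  | .lit _ => ∅
  | .var x => {x}
  | .add e₁ e₂ => e₁.vars ∪ e₂.vars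
  | .eq e₁ e₂ => e₁.vars ∪ e₂.vars
  | .and e₁ e₂ => e₁.vars ∪ e₂.vars
  | .not e => e.vars

/-! ## Substitutions -/

abbrev Subst := Var → Option Expr

def Subst.single (x : Var) (e : Expr) : Subst := fun z => if z = x then some e else none

def Subst.ofList (l : List (Var × Expr)) : Subst := fun x => l.lookup x

/-- Union of substitutions (left-biased). -/
def Subst.union (σ₁ σ₂ : Subst) : Subst := fun x => (σ₁ x).orElse (fun _ => σ₂ x)

def Subst.domain (σ : Subst) : Set Var := {x | (σ x).isSome}

/-- σ is a substitution of values (literals) for exactly the variables in `d`. -/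
def IsValSubst (σ : Subst) (d : Finset Var) : Prop :=
  (∀ x, x ∈ d ↔ (σ x).isSome) ∧ (∀ x e, σ x = some e → ∃ v : Val, e = .lit v)

def Expr.subst (σ : Subst) : Expr → Expr
  | .lit v => .lit v
  | .var x => (σ x).getD (.var x)
  | .add e₁ e₂ => .add (e₁.subst σ) (e₂.subst σ)
  | .eq e₁ e₂ => .eq (e₁.subst σ) (e₂.subst σ)
  | .and e₁ e₂ => .and (e₁.subst σ) (e₂.subst σ)
  | .not e => .not (e.subst σ)

/-! ## Spatial formulae and assertions -/

/-- Spatial formulae; predicate instances carry an optional level tag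
    (`none` means the tag has been erased). -/
inductive Spatial : Type
  | emp : Spatial
  | pts : Expr → ℕ → Expr → Spatial   -- ⟨e₁, ι⟩ ↦ e₂
  | blk : Expr → ℕ → Spatial           -- [e, m]
  | pred : String → Option ℕ → List Expr → Spatial  -- p^ℓ(ē)
  | star : Spatial → Spatial → Spatial
  deriving DecidableEq

def Spatial.vars : Spatial → Finset Var
  | .emp => ∅
  | .pts e₁ _ e₂ => e₁.vars ∪ e₂.vars
  | .blk e _ => e.vars
  | .pred _ _ args => args.foldr (fun e acc => e.vars ∪ acc) ∅
  | .star P Q => P.vars ∪ Q.vars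

def Spatial.subst (σ : Subst) : Spatial → Spatial
  | .emp => .emp
  | .pts e₁ ι e₂ => .pts (e₁.subst σ) ι (e₂.subst σ)
  | .blk e m => .blk (e.subst σ) m
  | .pred p t args => .pred p t (args.map (Expr.subst σ))
  | .star P Q => .star (P.subst σ) (Q.subst σ)

def Spatial.setTags (t : Option ℕ) : Spatial → Spatial
  | .pred p _ args => .pred p t args
  | .star P Q => .star (P.setTags t) (Q.setTags t)
  | s => s

/-- ⌊P⌋: erase all level tags. -/
def Spatial.eraseTags (s : Spatial) : Spatial := s.setTags none

/-- P mentions no level tags. -/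
def Spatial.TagFree (s : Spatial) : Prop := s.eraseTags = s

def Spatial.hasPred : Spatial → Prop
  | .pred _ _ _ => True
  | .star P Q => P.hasPred ∨ Q.hasPred
  | _ => False

def Spatial.hasPts : Spatial → Prop
  | .pts _ _ _ => True
  | .star P Q => P.hasPts ∨ Q.hasPts
  | _ => False

/-- Assertions {φ; P}: a pure part and a spatial part. -/
structure Assn where
  pure : Expr
  spat : Spatial

def Assn.vars (A : Assn) : Finset Var := A.pure.vars ∪ A.spat.vars
def Assn.subst (A : Assn) (σ : Subst) : Assn := ⟨A.pure.subst σ, A.spat.subst σ⟩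
def Assn.eraseTags (A : Assn) : Assn := ⟨A.pure, A.spat.eraseTags⟩

/-- Ghosts: GV(Γ, P, Q) = Vars(P) ∖ Γ. -/
def GV (Γ : Finset Var) (P _Q : Assn) : Finset Var := P.vars \ Γ
/-- Existentials: EV(Γ, P, Q) = Vars(Q) ∖ (Γ ∪ Vars(P)). -/
def EV (Γ : Finset Var) (P Q : Assn) : Finset Var := Q.vars \ (Γ ∪ P.vars)

/-! ## Satisfaction -/

/-- Interpretations of inductive heap predicates. -/
abbrev Interp := String → Heap → List Val → Prop

def evalList (es : List Expr) (s : Store) : Option (List Val) := es.mapM (Expr.eval · s)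

/-- Satisfaction of a spatial formula. Blocks have no spatial footprint;
    points-to heaplets are singleton heaps at a non-null base address. -/
def SatS (I : Interp) : Heap → Store → Spatial → Prop
  | h, _, .emp => h = ∅
  | h, s, .pts e₁ ι e₂ =>
      ∃ (l : Loc) (v : Val), 0 < l ∧ e₁.eval s = some (l : Val) ∧ e₂.eval s = some v ∧
        h = Finmap.singleton (l + ι) v
  | h, _, .blk _ _ => h = ∅
  | h, s, .pred p _ args => ∃ vs, evalList args s = some vs ∧ I p h vs
  | h, s, .star P Q => ∃ h₁ h₂, h₁.Disjoint h₂ ∧ h = h₁ ∪ h₂ ∧ SatS I h₁ s P ∧ SatS I h₂ s Q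

/-- Satisfaction ⟨h, s⟩ ⊨ {φ; P}. -/
def Sat (I : Interp) (h : Heap) (s : Store) (A : Assn) : Prop :=
  A.pure.holds s ∧ SatS I h s A.spat

/-! ## Programs and small-step operational semantics -/

inductive Cmd : Type
  | read : Var → Var → ℕ → Cmd       -- let y = *(x + ι)
  | write : Var → ℕ → Expr → Cmd     -- *(x + ι) := e
  | skip : Cmd
  | error : Cmd
  | ite : Expr → Cmd → Cmd → Cmd
  | call : String → List Expr → Cmd
  | seq : Cmd → Cmd → Cmd
  | malloc : Var → ℕ → Cmd           -- let y = malloc(m)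
  | free : Var → ℕ → Cmd             -- free(x), block of m cells
  deriving DecidableEq

structure FunDef where
  name : String
  params : List Var
  body : Cmd

abbrev FunDict := List FunDef

def FunDict.find (Δ : FunDict) (f : String) : Option FunDef := Δ.find? (fun fd => fd.name == f)

def bindStore (xs : List Var) (vs : List Val) : Store :=
  (xs.zip vs).foldr (fun p acc => acc.insert p.1 p.2) ∅

abbrev Frame := Cmd × Store
abbrev Config := Heap × List Frame

def allocCells (l : Loc) : List Val → Heap → Heap
  | [], h => h
  | v :: vs, h => (allocCells (l + 1) vs h).insert l v

def freeCells (l : Loc) : ℕ → Heap → Heap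
  | 0, h => h
  | m + 1, h => (freeCells (l + 1) m h).erase l

/-- Local (single-frame, non-call) steps of atomic commands. -/
inductive HStep : Heap → Cmd → Store → Heap → Cmd → Store → Prop
  | read {h s y x ι} {l : Loc} {v : Val} :
      s.lookup x = some (l : Val) → h.lookup (l + ι) = some v →
      HStep h (.read y x ι) s h .skip (s.insert y v)
  | write {h s x ι e} {l : Loc} {v v' : Val} :
      s.lookup x = some (l : Val) → h.lookup (l + ι) = some v' → e.eval s = some v →
      HStep h (.write x ι e) s (h.insert (l + ι) v) .skip s
  | malloc {h s y m} {l : Loc} {vs : List Val} :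
      0 < l → vs.length = m → (∀ i < m, (l + i) ∉ h) →
      HStep h (.malloc y m) s (allocCells l vs h) .skip (s.insert y (l : Val))
  | free {h s x m} {l : Loc} :
      s.lookup x = some (l : Val) → (∀ i < m, (l + i) ∈ h) →
      HStep h (.free x m) s (freeCells l m h) .skip s
  | iteTrue {h s e c₁ c₂} : e.holds s → HStep h (.ite e c₁ c₂) s h c₁ s
  | iteFalse {h s e c₁ c₂} {v : Val} : e.eval s = some v → v ≠ 1 →
      HStep h (.ite e c₁ c₂) s h c₂ s

/-- Small-step operational semantics on configurations (heap + stack of frames). -/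
inductive Step (Δ : FunDict) : Config → Config → Prop
  | head {h c s h' c' s' S} : HStep h c s h' c' s' →
      Step Δ (h, (c, s) :: S) (h', (c', s') :: S)
  | seqStep {h c₁ s h' c₁' s' c₂ S} : Step Δ (h, (c₁, s) :: S) (h', (c₁', s') :: S) →
      Step Δ (h, (.seq c₁ c₂, s) :: S) (h', (.seq c₁' c₂, s') :: S)
  | seqSkip {h c s S} : Step Δ (h, (.seq .skip c, s) :: S) (h, (c, s) :: S)
  | call {h s S f args vs fd} : Δ.find f = some fd → evalList args s = some vs →
      Step Δ (h, (.call f args, s) :: S)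
             (h, (fd.body, bindStore fd.params vs) :: (.skip, s) :: S)
  | callSeq {h s S f args vs fd c₂} : Δ.find f = some fd → evalList args s = some vs →
      Step Δ (h, (.seq (.call f args) c₂, s) :: S)
             (h, (fd.body, bindStore fd.params vs) :: (c₂, s) :: S)
  | ret {h s' c s S} : Step Δ (h, (.skip, s') :: (c, s) :: S) (h, (c, s) :: S)

/-- Δ ⊢ cfg ⇝* cfg' -/
def Steps (Δ : FunDict) : Config → Config → Prop := Relation.ReflTransGen (Step Δ)

/-- |h| -/
def heapSize (h : Heap) : ℕ := h.keys.card

/-- Every execution trace from `cfg` is finite. -/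
def Terminates (Δ : FunDict) (cfg : Config) : Prop :=
  ¬ ∃ ρ : ℕ → Config, ρ 0 = cfg ∧ ∀ i, Step Δ (ρ i) (ρ (i + 1))

/-! ## Sized validity -/

/-- Sized validity: Σ; Γ; {P} c {Q} is n-valid w.r.t. Δ. -/
def Valid (I : Interp) (Δ : FunDict) (Γ : Finset Var) (P : Assn) (c : Cmd) (Q : Assn)
    (n : ℕ) : Prop :=
  ∀ (h h' : Heap) (s s' : Store),
    heapSize h ≤ n →
    Steps Δ (h, [(c, s)]) (h', [(.skip, s')]) →
    s.keys = Γ →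
    ∀ σgv : Subst, IsValSubst σgv (GV Γ P Q) → Sat I h s (P.subst σgv) →
      ∃ σev : Subst, IsValSubst σev (EV Γ P Q) ∧ Sat I h' s' (Q.subst (σev.union σgv))

/-! ## Contexts: inductive predicates and function specifications -/

structure PredClause where
  guard : Expr
  pure : Expr
  spat : Spatial

structure PredDef where
  name : String
  params : List Var
  clauses : List PredClause

/-- A well-founded inductive predicate: every clause containing a recursive
    predicate instance also contains at least one points-to heaplet. -/
def PredDef.WF (D : PredDef) : Prop :=
  ∀ cl ∈ D.clauses, cl.spat.hasPred → cl.spat.hasPts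

structure FunSpec where
  name : String
  params : List Var
  pre : Assn
  post : Assn

structure Ctx where
  preds : List PredDef
  funs : List FunSpec

/-- The guard of a clause, instantiated by σ, is true (under every store). -/
def ClauseGuardTrue (σ : Subst) (cl : PredClause) : Prop :=
  ∀ s : Store, (cl.guard.subst σ).holds s

/-- The body of a clause, instantiated by σ, is satisfied by `h` under some
    valuation (store) of the clause's free variables. -/
def ClauseBodySat (I : Interp) (σ : Subst) (cl : PredClause) (h : Heap) : Prop :=
  ∃ s : Store, Sat I h s ⟨cl.pure.subst σ, cl.spat.subst σ⟩

/-- Substitution of the given values for the formal parameters of `D`. -/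
def valSubstOf (D : PredDef) (vs : List Val) : Subst :=
  Subst.ofList (D.params.zip (vs.map Expr.lit))

/-- `I` interprets `D` by selecting the *first* clause whose guard holds. -/
def UnfoldsFirst (I : Interp) (D : PredDef) : Prop :=
  ∀ (h : Heap) (vs : List Val),
    I D.name h vs ↔
      (vs.length = D.params.length ∧
       ∃ j : Fin D.clauses.length,
         (∀ i : Fin D.clauses.length, (i : ℕ) < (j : ℕ) →
            ¬ ClauseGuardTrue (valSubstOf D vs) (D.clauses.get i)) ∧
         ClauseGuardTrue (valSubstOf D vs) (D.clauses.get j) ∧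
         ClauseBodySat I (valSubstOf D vs) (D.clauses.get j) h)

/-- `I` interprets `D` via *some* clause whose guard holds. -/
def UnfoldsSome (I : Interp) (D : PredDef) : Prop :=
  ∀ (h : Heap) (vs : List Val),
    I D.name h vs ↔
      (vs.length = D.params.length ∧
       ∃ j : Fin D.clauses.length,
         ClauseGuardTrue (valSubstOf D vs) (D.clauses.get j) ∧
         ClauseBodySat I (valSubstOf D vs) (D.clauses.get j) h)

/-! ## Coherence of a function dictionary with a list of function specifications -/

inductive Coherent (I : Interp) (n : ℕ) : FunDict → List FunSpec → Prop
  | nil : Coherent I n [] []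
  | aux {Δ Φ fd fs} : Coherent I n Δ Φ →
      fd.name = fs.name → fd.params = fs.params →
      Valid I Δ fs.params.toFinset fs.pre fd.body fs.post n →
      Coherent I n (fd :: Δ) (fs :: Φ)
  | recC {Δ Φ fd fs} {φ : Expr} {P' : Spatial} {p : String} {es : List Expr} :
      Coherent I n Δ Φ →
      fd.name = fs.name → fd.params = fs.params →
      fs.pre = ⟨φ, .star P' (.pred p (some 1) es)⟩ →
      P'.TagFree → fs.post.spat.TagFree →
      (∀ n' < n, Valid I (fd :: Δ) fs.params.toFinset fs.pre fd.body fs.post n') →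
      Coherent I n (fd :: Δ) (fs :: Φ)

/-- `fd`/`fs` occur in Δ/Φ as an auxiliary function covered by clause (b)
    of the coherence definition. -/
def AuxCovered (I : Interp) (n : ℕ) (Δ : FunDict) (Φ : List FunSpec)
    (fd : FunDef) (fs : FunSpec) : Prop :=
  ∃ Δ₁ Δ₂ Φ₁ Φ₂, Δ = Δ₁ ++ fd :: Δ₂ ∧ Φ = Φ₁ ++ fs :: Φ₂ ∧
    fd.name = fs.name ∧ fd.params = fs.params ∧
    Valid I Δ₂ fs.params.toFinset fs.pre fd.body fs.post n

/-- `fd`/`fs` occur in Δ/Φ as the recursive function covered by clause (c)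
    of the coherence definition. -/
def RecCovered (I : Interp) (n : ℕ) (Δ : FunDict) (Φ : List FunSpec)
    (fd : FunDef) (fs : FunSpec) : Prop :=
  ∃ (Δ₂ : FunDict) (Φ₂ : List FunSpec) (φ : Expr) (P' : Spatial) (p : String) (es : List Expr),
    Δ = fd :: Δ₂ ∧ Φ = fs :: Φ₂ ∧
    fd.name = fs.name ∧ fd.params = fs.params ∧
    fs.pre = ⟨φ, .star P' (.pred p (some 1) es)⟩ ∧ P'.TagFree ∧ fs.post.spat.TagFree ∧
    (∀ n' < n, Valid I Δ fs.params.toFinset fs.pre fd.body fs.post n')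

/-! ## The SSL transforming-entailment judgment -/

/-- ⊛_{0 ≤ i < |es|} ⟨x, i⟩ ↦ esᵢ -/
def ptsRange (x : Var) (es : List Expr) : Spatial :=
  (es.zipIdx.map Prod.swap).foldr (fun p acc => .star (.pts (.var x) p.1 p.2) acc) .emp

/-- Nested conditional: if (g₁) {c₁} else {if (g₂) {c₂} … else {c_N}}. -/
def iteChain : List Expr → List Cmd → Cmd
  | _, [] => .skip
  | _, [c] => c
  | g :: gs, c :: cs => .ite g c (iteChain gs cs)
  | [], c :: _ => c

/-- The SSL judgment Σ; Γ ⊢ {P} ⇝ {Q} | c, inductively generated by the SSL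
    rules (Emp, Inconsistency, SubstLeft, NullNotLVal, StarPartial, Read, Write,
    Frame, Alloc, Free, Open, Close, Call, AbduceCall, UnifyHeaps, UnifyPure,
    Pick, SubstRight). -/
inductive Deriv (maxUnfold : ℕ) : Ctx → Finset Var → Assn → Assn → Cmd → Prop
  | emp {Sg : Ctx} {Γ : Finset Var} {φ ψ : Expr} :
      EV Γ ⟨φ, .emp⟩ ⟨ψ, .emp⟩ = ∅ → PImplies φ ψ →
      Deriv maxUnfold Sg Γ ⟨φ, .emp⟩ ⟨ψ, .emp⟩ .skip
  | inconsistency {Sg Γ} {φ : Expr} {P : Spatial} {Q : Assn} :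
      (∀ s : Store, ¬ φ.holds s) →
      Deriv maxUnfold Sg Γ ⟨φ, P⟩ Q .error
  | substLeft {Sg Γ} {φ : Expr} {P : Spatial} {Q : Assn} {c x y} :
      PImplies φ (.eq (.var x) (.var y)) →
      Deriv maxUnfold Sg Γ (Assn.subst ⟨φ, P⟩ (Subst.single x (.var y)))
        (Q.subst (Subst.single x (.var y))) c →
      Deriv maxUnfold Sg Γ ⟨φ, P⟩ Q c
  | nullNotLVal {Sg Γ} {φ : Expr} {P : Spatial} {Q : Assn} {c x ι} {e : Expr} :
      Deriv maxUnfold Sg Γ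
        ⟨.and φ (.not (.eq (.var x) (.lit 0))), .star (.pts (.var x) ι e) P⟩ Q c →
      Deriv maxUnfold Sg Γ ⟨φ, .star (.pts (.var x) ι e) P⟩ Q c
  | starPartial {Sg Γ} {φ : Expr} {P : Spatial} {Q : Assn} {c x y} {ι ι' : ℕ} {e e' : Expr} :
      Deriv maxUnfold Sg Γ
        ⟨.and φ (.not (.eq (.add (.var x) (.lit (ι : Val))) (.add (.var y) (.lit (ι' : Val))))),
         .star (.pts (.var x) ι e) (.star (.pts (.var y) ι' e') P)⟩ Q c →
      Deriv maxUnfold Sg Γ ⟨φ, .star (.pts (.var x) ι e) (.star (.pts (.var y) ι' e') P)⟩ Q c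
  | read {Sg Γ} {φ : Expr} {P : Spatial} {Q : Assn} {c} {x a y : Var} {ι : ℕ} :
      a ∈ GV Γ ⟨φ, .star (.pts (.var x) ι (.var a)) P⟩ Q →
      y ∉ Γ → y ∉ Assn.vars ⟨φ, .star (.pts (.var x) ι (.var a)) P⟩ → y ∉ Q.vars →
      Deriv maxUnfold Sg (insert y Γ)
        (Assn.subst ⟨φ, .star (.pts (.var x) ι (.var a)) P⟩ (Subst.single a (.var y)))
        (Q.subst (Subst.single a (.var y))) c →
      Deriv maxUnfold Sg Γ ⟨φ, .star (.pts (.var x) ι (.var a)) P⟩ Q (.seq (.read y x ι) c)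
  | write {Sg Γ} {φ ψ : Expr} {P Q : Spatial} {c} {x : Var} {ι : ℕ} {e e' : Expr} :
      e.vars ⊆ Γ →
      Deriv maxUnfold Sg Γ ⟨φ, .star (.pts (.var x) ι e) P⟩ ⟨ψ, .star (.pts (.var x) ι e) Q⟩ c →
      Deriv maxUnfold Sg Γ ⟨φ, .star (.pts (.var x) ι e') P⟩ ⟨ψ, .star (.pts (.var x) ι e) Q⟩
        (.seq (.write x ι e) c)
  | frame {Sg Γ} {φ ψ : Expr} {P Q R R' : Spatial} {c} :
      EV Γ ⟨φ, P⟩ ⟨ψ, Q⟩ ∩ R.vars = ∅ →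
      R.eraseTags = R'.eraseTags →
      Deriv maxUnfold Sg Γ ⟨φ, P⟩ ⟨ψ, Q⟩ c →
      Deriv maxUnfold Sg Γ ⟨φ, .star P R⟩ ⟨ψ, .star Q R'⟩ c
  | unifyHeaps {Sg Γ} {φ ψ : Expr} {P Q R R' : Spatial} {c} {σ : Subst} :
      (R'.subst σ).eraseTags = R.eraseTags →
      σ.domain ≠ ∅ → σ.domain ⊆ ↑(EV Γ ⟨φ, .star P R⟩ ⟨ψ, .star Q R'⟩) →
      Deriv maxUnfold Sg Γ ⟨φ, .star P R⟩ (Assn.subst ⟨ψ, .star Q R'⟩ σ) c →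
      Deriv maxUnfold Sg Γ ⟨φ, .star P R⟩ ⟨ψ, .star Q R'⟩ c
  | pick {Sg Γ} {φ ψ : Expr} {P Q : Spatial} {c} {y : Var} {e : Expr} :
      y ∈ EV Γ ⟨φ, P⟩ ⟨ψ, Q⟩ →
      e.vars ⊆ Γ ∪ GV Γ ⟨φ, P⟩ ⟨ψ, Q⟩ →
      Deriv maxUnfold Sg Γ ⟨φ, P⟩ (Assn.subst ⟨ψ, Q⟩ (Subst.single y e)) c →
      Deriv maxUnfold Sg Γ ⟨φ, P⟩ ⟨ψ, Q⟩ c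
  | unifyPure {Sg Γ} {φ φ' ψ ψ' : Expr} {P Q : Spatial} {c} {σ : Subst} :
      ψ'.subst σ = φ' →
      σ.domain ≠ ∅ → σ.domain ⊆ ↑(EV Γ ⟨.and φ φ', P⟩ ⟨.and ψ ψ', Q⟩) →
      Deriv maxUnfold Sg Γ ⟨.and φ φ', P⟩ (Assn.subst ⟨.and ψ ψ', Q⟩ σ) c →
      Deriv maxUnfold Sg Γ ⟨.and φ φ', P⟩ ⟨.and ψ ψ', Q⟩ c
  | substRight {Sg Γ} {P : Assn} {ψ : Expr} {Q : Spatial} {c} {x : Var} {e : Expr} :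
      x ∈ EV Γ P ⟨.and ψ (.eq (.var x) e), Q⟩ →
      Deriv maxUnfold Sg Γ P (Assn.subst ⟨ψ, Q⟩ (Subst.single x e)) c →
      Deriv maxUnfold Sg Γ P ⟨.and ψ (.eq (.var x) e), Q⟩ c
  | alloc {Sg Γ} {φ ψ : Expr} {P Q R R' : Spatial} {z y : Var} {m : ℕ}
      {es : List Expr} {ts : List Var} {c} :
      R = .star (.blk (.var z) m) (ptsRange z es) → es.length = m →
      z ∈ EV Γ ⟨φ, P⟩ ⟨ψ, .star Q R⟩ →
      ts.length = m →
      (∀ w ∈ y :: ts, w ∉ Γ ∧ w ∉ Assn.vars ⟨φ, P⟩ ∧ w ∉ Assn.vars ⟨ψ, .star Q R⟩) →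
      R' = .star (.blk (.var y) m) (ptsRange y (ts.map .var)) →
      Deriv maxUnfold Sg (insert y Γ) ⟨φ, .star P R'⟩ ⟨ψ, .star Q R⟩ c →
      Deriv maxUnfold Sg Γ ⟨φ, P⟩ ⟨ψ, .star Q R⟩ (.seq (.malloc y m) c)
  | free {Sg Γ} {φ : Expr} {P : Spatial} {Q : Assn} {R : Spatial} {x : Var} {m : ℕ}
      {es : List Expr} {c} :
      R = .star (.blk (.var x) m) (ptsRange x es) → es.length = m →
      x ∈ Γ → (∀ e ∈ es, Expr.vars e ⊆ Γ) →
      Deriv maxUnfold Sg Γ ⟨φ, P⟩ Q c →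
      Deriv maxUnfold Sg Γ ⟨φ, .star P R⟩ Q (.seq (.free x m) c)
  | openR {Sg : Ctx} {Γ} {φ : Expr} {P : Spatial} {Q : Assn} {p : String}
      {args : List Expr} {ℓ : ℕ} {D : PredDef} {σ : Subst} {cs : List Cmd} :
      D ∈ Sg.preds → D.name = p →
      (∀ a ∈ args, Expr.vars a ⊆ Γ) →
      D.params.length = args.length →
      ℓ < maxUnfold →
      σ = Subst.ofList (D.params.zip args) →
      cs.length = D.clauses.length →
      (∀ (j : ℕ) (hj : j < D.clauses.length) (hj' : j < cs.length),
        Deriv maxUnfold Sg Γ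
          ⟨.and φ (.and ((D.clauses[j]'hj).guard.subst σ) ((D.clauses[j]'hj).pure.subst σ)),
           .star (((D.clauses[j]'hj).spat.subst σ).setTags (some (ℓ + 1))) P.eraseTags⟩
          Q (cs[j]'hj')) →
      Deriv maxUnfold Sg Γ ⟨φ, .star P (.pred p (some ℓ) args)⟩ Q
        (iteChain (D.clauses.map (fun cl => cl.guard.subst σ)) cs)
  | close {Sg : Ctx} {Γ} {P : Assn} {ψ : Expr} {Q : Spatial} {p : String}
      {args : List Expr} {ℓ : ℕ} {D : PredDef} {σ : Subst} {k : ℕ} {c}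
      (hk : k < D.clauses.length) :
      D ∈ Sg.preds → D.name = p →
      D.params.length = args.length →
      ℓ < maxUnfold →
      σ = Subst.ofList (D.params.zip args) →
      Deriv maxUnfold Sg Γ P
        ⟨.and ψ (.and ((D.clauses[k]'hk).guard.subst σ) ((D.clauses[k]'hk).pure.subst σ)),
         .star Q (((D.clauses[k]'hk).spat.subst σ).setTags (some (ℓ + 1)))⟩ c →
      Deriv maxUnfold Sg Γ P ⟨ψ, .star Q (.pred p (some ℓ) args)⟩ c
  | callR {Sg : Ctx} {Γ} {φ : Expr} {P R : Spatial} {Q : Assn} {fs : FunSpec}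
      {σ : Subst} {es : List Expr} {c} :
      fs ∈ Sg.funs →
      R = fs.pre.spat.subst σ →
      PImplies φ (fs.pre.pure.subst σ) →
      es = fs.params.map (fun x => (σ x).getD (.var x)) →
      (∀ e ∈ es, Expr.vars e ⊆ Γ) →
      Deriv maxUnfold Sg Γ
        ⟨.and φ (fs.post.pure.subst σ), .star P ((fs.post.spat.subst σ).eraseTags)⟩ Q c →
      Deriv maxUnfold Sg Γ ⟨φ, .star P R⟩ Q (.seq (.call fs.name es) c)
  | abduceCall {Sg : Ctx} {Γ} {φ : Expr} {P R : Spatial} {Q : Assn} {fs : FunSpec}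
      {σ : Subst} {Pf Ff Fh F' : Spatial} {c₁ c₂} :
      fs ∈ Sg.funs →
      fs.pre.spat = .star Pf Ff →
      ¬ Ff.hasPred → Ff ≠ .emp →
      P = Pf.subst σ → F' = Ff.subst σ →
      Deriv maxUnfold Sg Γ ⟨φ, Fh⟩ ⟨φ, F'⟩ c₁ →
      Deriv maxUnfold Sg Γ ⟨φ, .star P (.star F' R)⟩ Q c₂ →
      Deriv maxUnfold Sg Γ ⟨φ, .star P (.star Fh R)⟩ Q (.seq c₁ c₂)

/-- The top-level SSL judgment for a goal named `f` with formal parameters `xs`: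
    either the rule Induction is applied first (adding the recursive hypothesis
    to the context), or the derivation proceeds with the remaining rules. -/
inductive DerivTop (maxUnfold : ℕ) : Ctx → String → List Var → Assn → Assn → Cmd → Prop
  | induction {Sg : Ctx} {f : String} {xs : List Var} {φ : Expr} {p : String}
      {args : List Expr} {P : Spatial} {Q : Assn} {c} :
      Deriv maxUnfold
        ⟨Sg.preds,
         ⟨f, xs, ⟨φ, .star (.pred p (some 1) args) P.eraseTags⟩, Q.eraseTags⟩ :: Sg.funs⟩
        xs.toFinset ⟨φ, .star (.pred p (some 0) args) P⟩ Q c →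
      DerivTop maxUnfold Sg f xs ⟨φ, .star (.pred p (some 0) args) P⟩ Q c
  | plain {Sg : Ctx} {f : String} {xs : List Var} {P Q : Assn} {c} :
      Deriv maxUnfold Sg xs.toFinset P Q c →
      DerivTop maxUnfold Sg f xs P Q c

/-! A terminated `skip` takes no step, so the final state is the initial one. Applying a
finitely supported substitution and then evaluating is evaluation under a modified store, so the
valid implication φ ⇒ ψ transfers from the substituted precondition to the substituted
postcondition; with no existentials, the ghost substitution alone instantiates it. -/

theorem _root_.Finmap.exists_lookup_eq_ite {α β : Type*} [DecidableEq α] (f : α → Option β)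
    (d : Finset α) (s : Finmap fun _ : α => β) :
    ∃ s' : Finmap fun _ : α => β, ∀ x, s'.lookup x = if x ∈ d then f x else s.lookup x := by
  induction d using Finset.induction_on with
  | empty => exact ⟨s, by simp⟩
  | insert a d _ ih =>
    obtain ⟨s', hs'⟩ := ih
    cases hfa : f a with
    | none =>
      refine ⟨s'.erase a, fun x => ?_⟩
      by_cases hx : x = a
      · subst hx
        simp [hfa]
      · simp [hx, hs', Finmap.lookup_erase_ne hx]
    | some v =>
      refine ⟨s'.insert a v, fun x => ?_⟩
      by_cases hx : x = a
      · subst hx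
        simp [hfa]
      · simp [hx, hs', Finmap.lookup_insert_of_ne _ hx]

theorem Expr.eval_subst {σ : Subst} {s s' : Store}
    (hs' : ∀ x, s'.lookup x = ((σ x).getD (.var x)).eval s) (e : Expr) :
    (e.subst σ).eval s = e.eval s' := by
  induction e with
  | lit v => rfl
  | var x => exact (hs' x).symm
  | add e₁ e₂ ih₁ ih₂ | eq e₁ e₂ ih₁ ih₂ | and e₁ e₂ ih₁ ih₂ =>
    simp only [Expr.subst, Expr.eval, ih₁, ih₂]
  | not e ih => simp only [Expr.subst, Expr.eval, ih]

theorem Expr.exists_store_eval_subst {σ : Subst} {d : Finset Var} (hσ : ∀ x ∉ d, σ x = none)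
    (s : Store) : ∃ s' : Store, ∀ e : Expr, (e.subst σ).eval s = e.eval s' := by
  obtain ⟨s', hs'⟩ :=
    Finmap.exists_lookup_eq_ite (fun x => ((σ x).getD (.var x)).eval s) d s
  refine ⟨s', Expr.eval_subst fun x => ?_⟩
  rw [hs']
  split_ifs with hx
  · rfl
  · simp [hσ x hx, Expr.eval]

theorem Expr.holds_subst_of_pImplies {φ ψ : Expr} (himp : PImplies φ ψ) {σ : Subst}
    {d : Finset Var} (hσ : ∀ x ∉ d, σ x = none) {s : Store} (hφ : (φ.subst σ).holds s) :
    (ψ.subst σ).holds s := by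
  obtain ⟨s', hs'⟩ := Expr.exists_store_eval_subst hσ s
  unfold Expr.holds at hφ ⊢
  rw [hs'] at hφ ⊢
  exact himp s' hφ

theorem IsValSubst.eq_none_of_notMem {σ : Subst} {d : Finset Var} (hσ : IsValSubst σ d) :
    ∀ x ∉ d, σ x = none :=
  fun x hx => Option.not_isSome_iff_eq_none.mp fun h => hx ((hσ.1 x).mpr h)

theorem isValSubst_empty : IsValSubst (fun _ => none) ∅ :=
  ⟨by simp, by simp⟩

@[simp]
theorem Subst.none_union (σ : Subst) : Subst.union (fun _ => none) σ = σ := by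
  funext x
  simp [Subst.union, Option.orElse]

theorem steps_skip_iff (Δ : FunDict) (h : Heap) (s : Store) (cfg : Config) :
    Steps Δ (h, [(.skip, s)]) cfg ↔ cfg = (h, [(.skip, s)]) :=
  Relation.reflTransGen_iff_eq fun _ hstep => by
    rcases hstep with ⟨⟨⟩⟩

theorem emp_sound_general
    (I : Interp) (n : ℕ) (Δ : FunDict) (Γ : Finset Var) (φ ψ : Expr)
    (hEV : EV Γ ⟨φ, .emp⟩ ⟨ψ, .emp⟩ = ∅)
    (himp : PImplies φ ψ) :
    Valid I Δ Γ ⟨φ, .emp⟩ .skip ⟨ψ, .emp⟩ n := by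
  intro h h' s s' _ hsteps _ σgv hσgv ⟨hφ, hemp⟩
  obtain ⟨rfl, rfl⟩ : h' = h ∧ s' = s := by
    simpa using (steps_skip_iff Δ h s _).mp hsteps
  refine ⟨fun _ => none, hEV ▸ isValSubst_empty, ?_, hemp⟩
  simp only [Subst.none_union]
  exact Expr.holds_subst_of_pImplies himp hσgv.eq_none_of_notMem hφ

/-- **Soundness of the Emp rule**: if the goal has no existentials and the pure
implication φ ⇒ ψ is valid, then Σ; Γ; {φ; emp} skip {ψ; emp} is n-valid. -/
theorem emp_sound
    (I : Interp) (n : ℕ) (Δ : FunDict) (Sg : Ctx) (Γ : Finset Var) (φ ψ : Expr)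
    (hEV : EV Γ ⟨φ, .emp⟩ ⟨ψ, .emp⟩ = ∅)
    (himp : PImplies φ ψ) :
    Valid I Δ Γ ⟨φ, .emp⟩ .skip ⟨ψ, .emp⟩ n :=
  emp_sound_general I n Δ Γ φ ψ hEV himp

end SSL
end

section
/- Soundness of the NullNotLVal rule: for every n ∈ ℕ and every function dictionary Δ, if the specification Σ; Γ; {φ ∧ x ≠ 0; ⟨x,ι⟩ ↦ e ∗ P} c {Q} is n-valid w.r.t. Δ, then the specification Σ; Γ; {φ; ⟨x,ι⟩ ↦ e ∗ P} c {Q} is n-valid w.r.t. Δ; this is because any heap–store pair satisfying a precondition containing the heaplet ⟨x,ι⟩ ↦ e must evaluate x to a non-null address (0 is never allocated), so it also satisfies the strengthened precondition. -/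
set_option maxHeartbeats 1000000

namespace SSL

/-- Equal variable sets give equal ghosts and existentials, so the same substitutions serve
    both specifications. -/
theorem Valid.strengthen_pre {I : Interp} {Δ : FunDict} {Γ : Finset Var} {P P' Q : Assn}
    {c : Cmd} {n : ℕ} (hvars : P'.vars = P.vars)
    (himp : ∀ h s σ, Sat I h s (P.subst σ) → Sat I h s (P'.subst σ))
    (hvalid : Valid I Δ Γ P' c Q n) : Valid I Δ Γ P c Q n := by
  intro h h' s s' hsize hsteps hkeys σgv hσgv hsat
  have hGV : GV Γ P' Q = GV Γ P Q := by rw [GV, GV, hvars]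
  have hEV : EV Γ P' Q = EV Γ P Q := by rw [EV, EV, hvars]
  obtain ⟨σev, hσev, hpost⟩ :=
    hvalid h h' s s' hsize hsteps hkeys σgv (hGV ▸ hσgv) (himp h s σgv hsat)
  exact ⟨σev, hEV ▸ hσev, hpost⟩

theorem SatS.exists_pos_of_star_pts {I : Interp} {h : Heap} {s : Store} {a e : Expr} {ι : ℕ}
    {P : Spatial} (hsat : SatS I h s (.star (.pts a ι e) P)) :
    ∃ l : Loc, 0 < l ∧ a.eval s = some (l : Val) := by
  obtain ⟨_, _, _, _, ⟨l, _, hl, ha, _⟩, _⟩ := hsat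
  exact ⟨l, hl, ha⟩

theorem Expr.holds_and_not_eq_zero {φ a : Expr} {s : Store} {v : Val} (hφ : φ.holds s)
    (ha : a.eval s = some v) (hv : v ≠ 0) : (Expr.and φ (.not (.eq a (.lit 0)))).holds s := by
  simp only [Expr.holds] at hφ ⊢
  simp [Expr.eval, hφ, ha, hv]

theorem Sat.and_not_null_of_star_pts {I : Interp} {h : Heap} {s : Store} {φ : Expr}
    {P : Spatial} {x : Var} {ι : ℕ} {e : Expr} {σ : Subst}
    (hsat : Sat I h s (Assn.subst ⟨φ, .star (.pts (.var x) ι e) P⟩ σ)) :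
    Sat I h s
      (Assn.subst ⟨.and φ (.not (.eq (.var x) (.lit 0))), .star (.pts (.var x) ι e) P⟩ σ) := by
  obtain ⟨hφ, hspat⟩ := hsat
  obtain ⟨l, hl, hx⟩ := SatS.exists_pos_of_star_pts hspat
  exact ⟨Expr.holds_and_not_eq_zero hφ hx (by exact_mod_cast hl.ne'), hspat⟩

theorem nullNotLVal_sound_general
    (I : Interp) (n : ℕ) (Δ : FunDict) (Γ : Finset Var)
    (φ : Expr) (P : Spatial) (Q : Assn) (x : Var) (ι : ℕ) (e : Expr) (c : Cmd)
    (hprem : Valid I Δ Γ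
      ⟨.and φ (.not (.eq (.var x) (.lit 0))), .star (.pts (.var x) ι e) P⟩ c Q n) :
    Valid I Δ Γ ⟨φ, .star (.pts (.var x) ι e) P⟩ c Q n := by
  have hvars : Assn.vars ⟨.and φ (.not (.eq (.var x) (.lit 0))), .star (.pts (.var x) ι e) P⟩
      = Assn.vars ⟨φ, .star (.pts (.var x) ι e) P⟩ := by
    ext a
    simp only [Assn.vars, Expr.vars, Spatial.vars, Finset.mem_union, Finset.mem_singleton,
      Finset.notMem_empty]
    tauto
  exact Valid.strengthen_pre hvars (fun _ _ _ => Sat.and_not_null_of_star_pts) hprem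

/-- **Soundness of the NullNotLVal rule**. -/
theorem nullNotLVal_sound
    (I : Interp) (n : ℕ) (Δ : FunDict) (Sg : Ctx) (Γ : Finset Var)
    (φ : Expr) (P : Spatial) (Q : Assn) (x : Var) (ι : ℕ) (e : Expr) (c : Cmd)
    (hprem : Valid I Δ Γ
      ⟨.and φ (.not (.eq (.var x) (.lit 0))), .star (.pts (.var x) ι e) P⟩ c Q n) :
    Valid I Δ Γ ⟨φ, .star (.pts (.var x) ι e) P⟩ c Q n :=
  nullNotLVal_sound_general I n Δ Γ φ P Q x ι e c hprem

end SSL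
end

section
/- Soundness of the Pick rule (auxiliary variable elimination): for every n ∈ ℕ and every function dictionary Δ, if y ∈ EV(Γ, {φ; P}, {ψ; Q}) is an existential of the goal, Vars(e) ⊆ Γ ∪ GV(Γ, {φ; P}, {ψ; Q}), and the specification Σ; Γ; {φ; P} c [e/y]{ψ; Q} is n-valid w.r.t. Δ, then the specification Σ; Γ; {φ; P} c {ψ; Q} is n-valid w.r.t. Δ. -/
set_option maxHeartbeats 1000000

namespace SSL

/-! The premise supplies values for every existential except `y`, because `e` mentions only
program variables and ghosts. Give `y` the value that `e`, instantiated by the premise's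
substitution, takes in the final store: satisfaction sees a substituted expression only
through its value, so the postcondition with `e` for `y` becomes the postcondition with that
value for `y`. -/

theorem Expr.subst_subst_single (y : Var) (e₀ : Expr) (τ : Subst) (e : Expr) :
    (e.subst (Subst.single y e₀)).subst τ =
      e.subst (Function.update τ y (some (e₀.subst τ))) := by
  induction e with
  | var x => by_cases hx : x = y <;> simp [Expr.subst, Subst.single, hx]
  | _ => simp_all [Expr.subst]

theorem Spatial.subst_subst_single (y : Var) (e₀ : Expr) (τ : Subst) (P : Spatial) :
    (P.subst (Subst.single y e₀)).subst τ =
      P.subst (Function.update τ y (some (e₀.subst τ))) := by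
  induction P <;> simp_all [Spatial.subst, Expr.subst_subst_single]

theorem Assn.subst_subst_single (y : Var) (e₀ : Expr) (τ : Subst) (A : Assn) :
    (A.subst (Subst.single y e₀)).subst τ =
      A.subst (Function.update τ y (some (e₀.subst τ))) := by
  simp [Assn.subst, Expr.subst_subst_single, Spatial.subst_subst_single]

def Subst.Refines (s : Store) (σ₁ σ₂ : Subst) : Prop :=
  ∀ z w, ((σ₁ z).getD (.var z)).eval s = some w → ((σ₂ z).getD (.var z)).eval s = some w

theorem Expr.eval_subst_of_refines {s : Store} {σ₁ σ₂ : Subst} (hσ : Subst.Refines s σ₁ σ₂)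
    (e : Expr) {w : Val} (hw : (e.subst σ₁).eval s = some w) :
    (e.subst σ₂).eval s = some w := by
  induction e generalizing w with
  | lit v => exact hw
  | var x => exact hσ x w hw
  | _ =>
    simp only [Expr.subst, Expr.eval, Option.bind_eq_bind, Option.pure_def,
      Option.bind_eq_some_iff] at hw ⊢
    aesop

theorem evalList_map_subst_of_refines {s : Store} {σ₁ σ₂ : Subst} (hσ : Subst.Refines s σ₁ σ₂)
    (es : List Expr) {vs : List Val} (hvs : evalList (es.map (Expr.subst σ₁)) s = some vs) :
    evalList (es.map (Expr.subst σ₂)) s = some vs := by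
  induction es generalizing vs with
  | nil => exact hvs
  | cons a l ih =>
    simp only [evalList, List.map_cons, List.mapM_cons, Option.bind_eq_bind,
      Option.pure_def, Option.bind_eq_some_iff, Option.some.injEq] at hvs ⊢
    obtain ⟨v, hv, ws, hws, rfl⟩ := hvs
    exact ⟨v, Expr.eval_subst_of_refines hσ a hv, ws, ih hws, rfl⟩

theorem SatS.subst_of_refines {I : Interp} {s : Store} {σ₁ σ₂ : Subst}
    (hσ : Subst.Refines s σ₁ σ₂) (P : Spatial) {h : Heap} (hP : SatS I h s (P.subst σ₁)) :
    SatS I h s (P.subst σ₂) := by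
  induction P generalizing h with
  | emp | blk => exact hP
  | pts e₁ ι e₂ =>
    obtain ⟨l, v, hl, h₁, h₂, rfl⟩ := hP
    exact ⟨l, v, hl, Expr.eval_subst_of_refines hσ e₁ h₁,
      Expr.eval_subst_of_refines hσ e₂ h₂, rfl⟩
  | pred p t args =>
    obtain ⟨vs, hvs, hI⟩ := hP
    exact ⟨vs, evalList_map_subst_of_refines hσ args hvs, hI⟩
  | star P Q ihP ihQ =>
    obtain ⟨h₁, h₂, hd, rfl, hP, hQ⟩ := hP
    exact ⟨h₁, h₂, hd, rfl, ihP hP, ihQ hQ⟩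

theorem Sat.subst_of_refines {I : Interp} {h : Heap} {s : Store} {σ₁ σ₂ : Subst}
    (hσ : Subst.Refines s σ₁ σ₂) {A : Assn} (hA : Sat I h s (A.subst σ₁)) :
    Sat I h s (A.subst σ₂) :=
  ⟨Expr.eval_subst_of_refines hσ A.pure hA.1, SatS.subst_of_refines hσ A.spat hA.2⟩

/-- The default `0` is harmless: if `E` has no value under `s`, the satisfied assertion can only
use `E` where satisfaction ignores it (inside a block). -/
theorem Sat.subst_update_lit {I : Interp} {h : Heap} {s : Store} {τ : Subst} {y : Var}
    {E : Expr} {A : Assn} (hA : Sat I h s (A.subst (Function.update τ y (some E)))) :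
    Sat I h s (A.subst (Function.update τ y (some (.lit ((E.eval s).getD 0))))) := by
  refine hA.subst_of_refines fun z w hw => ?_
  by_cases hz : z = y
  · subst hz
    simp_all [Expr.eval]
  · simpa [hz] using hw

theorem Expr.vars_subst_single_subset (y : Var) (e₀ e : Expr) :
    (e.subst (Subst.single y e₀)).vars ⊆ e.vars.erase y ∪ e₀.vars := by
  induction e with
  | lit => simp [Expr.subst, Expr.vars]
  | var x => by_cases hx : x = y <;> simp [Expr.subst, Expr.vars, Subst.single, hx]
  | not e ih => exact ih
  | _ e₁ e₂ ih₁ ih₂ =>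
    simp only [Expr.subst, Expr.vars, Finset.erase_union_distrib]
    grind

theorem Expr.erase_vars_subset_vars_subst_single (y : Var) (e₀ e : Expr) :
    e.vars.erase y ⊆ (e.subst (Subst.single y e₀)).vars := by
  induction e with
  | lit => simp [Expr.vars]
  | var x =>
    intro z hz
    by_cases hx : x = y <;> simp_all [Expr.subst, Expr.vars, Subst.single]
  | not e ih => exact ih
  | _ e₁ e₂ ih₁ ih₂ =>
    simp only [Expr.subst, Expr.vars, Finset.erase_union_distrib]
    exact Finset.union_subset_union ih₁ ih₂

theorem List.mem_foldr_vars {z : Var} (es : List Expr) :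
    z ∈ es.foldr (fun e acc => e.vars ∪ acc) ∅ ↔ ∃ e ∈ es, z ∈ e.vars := by
  induction es <;> simp_all

theorem Spatial.vars_subst_single_subset (y : Var) (e₀ : Expr) (P : Spatial) :
    (P.subst (Subst.single y e₀)).vars ⊆ P.vars.erase y ∪ e₀.vars := by
  induction P with
  | emp => simp [Spatial.subst, Spatial.vars]
  | pts e₁ ι e₂ =>
    have := Expr.vars_subst_single_subset y e₀ e₁
    have := Expr.vars_subst_single_subset y e₀ e₂
    simp only [Spatial.subst, Spatial.vars, Finset.erase_union_distrib]
    grind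
  | blk e m => exact Expr.vars_subst_single_subset y e₀ e
  | pred p t args =>
    intro z hz
    simp only [Spatial.subst, Spatial.vars, List.mem_foldr_vars, List.mem_map] at hz
    obtain ⟨_, ⟨a, ha, rfl⟩, hz⟩ := hz
    have := Expr.vars_subst_single_subset y e₀ a hz
    simp only [Spatial.vars, Finset.mem_union, Finset.mem_erase, List.mem_foldr_vars] at this ⊢
    grind
  | star P Q ihP ihQ =>
    simp only [Spatial.subst, Spatial.vars, Finset.erase_union_distrib]
    grind

theorem Spatial.erase_vars_subset_vars_subst_single (y : Var) (e₀ : Expr) (P : Spatial) :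
    P.vars.erase y ⊆ (P.subst (Subst.single y e₀)).vars := by
  induction P with
  | emp => simp [Spatial.vars]
  | pts e₁ ι e₂ =>
    simp only [Spatial.subst, Spatial.vars, Finset.erase_union_distrib]
    exact Finset.union_subset_union (Expr.erase_vars_subset_vars_subst_single y e₀ e₁)
      (Expr.erase_vars_subset_vars_subst_single y e₀ e₂)
  | blk e m => exact Expr.erase_vars_subset_vars_subst_single y e₀ e
  | pred p t args =>
    intro z hz
    simp only [Spatial.vars, Finset.mem_erase, List.mem_foldr_vars] at hz
    obtain ⟨hzy, a, ha, hz⟩ := hz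
    simp only [Spatial.subst, Spatial.vars, List.mem_foldr_vars, List.mem_map]
    exact ⟨_, ⟨a, ha, rfl⟩,
      Expr.erase_vars_subset_vars_subst_single y e₀ a (Finset.mem_erase.2 ⟨hzy, hz⟩)⟩
  | star P Q ihP ihQ =>
    simp only [Spatial.subst, Spatial.vars, Finset.erase_union_distrib]
    exact Finset.union_subset_union ihP ihQ

theorem Assn.vars_subst_single_subset (y : Var) (e₀ : Expr) (A : Assn) :
    (A.subst (Subst.single y e₀)).vars ⊆ A.vars.erase y ∪ e₀.vars := by
  have := Expr.vars_subst_single_subset y e₀ A.pure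
  have := Spatial.vars_subst_single_subset y e₀ A.spat
  simp only [Assn.subst, Assn.vars, Finset.erase_union_distrib]
  grind

theorem Assn.erase_vars_subset_vars_subst_single (y : Var) (e₀ : Expr) (A : Assn) :
    A.vars.erase y ⊆ (A.subst (Subst.single y e₀)).vars := by
  simp only [Assn.subst, Assn.vars, Finset.erase_union_distrib]
  exact Finset.union_subset_union (Expr.erase_vars_subset_vars_subst_single y e₀ A.pure)
    (Spatial.erase_vars_subset_vars_subst_single y e₀ A.spat)

theorem EV_subst_single {Γ : Finset Var} {P Q : Assn} {y : Var} {e : Expr}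
    (he : e.vars ⊆ Γ ∪ GV Γ P Q) :
    EV Γ P (Q.subst (Subst.single y e)) = (EV Γ P Q).erase y := by
  have hsub := Assn.vars_subst_single_subset y e Q
  have hsup := Assn.erase_vars_subset_vars_subst_single y e Q
  ext z
  simp only [EV, GV, Finset.subset_iff, Finset.mem_union, Finset.mem_sdiff,
    Finset.mem_erase] at *
  grind

theorem IsValSubst.eq_none {σ : Subst} {d : Finset Var} (hσ : IsValSubst σ d) {x : Var}
    (hx : x ∉ d) : σ x = none :=
  Option.not_isSome_iff_eq_none.1 fun h => hx ((hσ.1 x).2 h)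

theorem IsValSubst.union_single {σ : Subst} {d : Finset Var} {y : Var}
    (hσ : IsValSubst σ (d.erase y)) (hy : y ∈ d) (v : Val) :
    IsValSubst (σ.union (Subst.single y (.lit v))) d := by
  have hσy : σ y = none := hσ.eq_none (Finset.notMem_erase y d)
  constructor
  · intro x
    by_cases hx : x = y
    · subst hx; simp [Subst.union, Subst.single, hσy, hy]
    · have := hσ.1 x
      cases h : σ x <;> simp_all [Subst.union, Subst.single]
  · intro x E hE
    by_cases hx : x = y
    · subst hx
      simp only [Subst.union, Subst.single, if_true, hσy, Option.orElse_none,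
        Option.some.injEq] at hE
      exact ⟨v, hE.symm⟩
    · cases h : σ x <;> simp_all [Subst.union, Subst.single]
      exact hσ.2 x E h

theorem Subst.union_single_union {σ₁ : Subst} {y : Var} (hy : σ₁ y = none) (E : Expr)
    (σ₂ : Subst) :
    (σ₁.union (Subst.single y E)).union σ₂ = Function.update (σ₁.union σ₂) y (some E) := by
  funext z
  by_cases hz : z = y
  · subst hz; simp [Subst.union, Subst.single, hy]
  · cases σ₁ z <;> simp [Subst.union, Subst.single, hz]

theorem pick_sound_general
    (I : Interp) (n : ℕ) (Δ : FunDict) (Γ : Finset Var)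
    (φ ψ : Expr) (P Q : Spatial) (y : Var) (e : Expr) (c : Cmd)
    (hy : y ∈ EV Γ ⟨φ, P⟩ ⟨ψ, Q⟩)
    (he : e.vars ⊆ Γ ∪ GV Γ ⟨φ, P⟩ ⟨ψ, Q⟩)
    (hprem : Valid I Δ Γ ⟨φ, P⟩ c (Assn.subst ⟨ψ, Q⟩ (Subst.single y e)) n) :
    Valid I Δ Γ ⟨φ, P⟩ c ⟨ψ, Q⟩ n := by
  intro h h' s s' hsize hsteps hkeys σgv hgv hpre
  obtain ⟨σev, hev, hpost⟩ := hprem h h' s s' hsize hsteps hkeys σgv hgv hpre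
  rw [EV_subst_single he] at hev
  set v : Val := ((e.subst (σev.union σgv)).eval s').getD 0
  refine ⟨σev.union (Subst.single y (.lit v)), hev.union_single hy v, ?_⟩
  rw [Assn.subst_subst_single] at hpost
  rw [Subst.union_single_union (hev.eq_none (Finset.notMem_erase y _))]
  exact hpost.subst_update_lit

/-- **Soundness of the Pick rule** (auxiliary variable elimination). -/
theorem pick_sound
    (I : Interp) (n : ℕ) (Δ : FunDict) (Sg : Ctx) (Γ : Finset Var)
    (φ ψ : Expr) (P Q : Spatial) (y : Var) (e : Expr) (c : Cmd)
    (hy : y ∈ EV Γ ⟨φ, P⟩ ⟨ψ, Q⟩)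
    (he : e.vars ⊆ Γ ∪ GV Γ ⟨φ, P⟩ ⟨ψ, Q⟩)
    (hprem : Valid I Δ Γ ⟨φ, P⟩ c (Assn.subst ⟨ψ, Q⟩ (Subst.single y e)) n) :
    Valid I Δ Γ ⟨φ, P⟩ c ⟨ψ, Q⟩ n :=
  pick_sound_general I n Δ Γ φ ψ P Q y e c hy he hprem

end SSL
end
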